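/- Let α, β be compositions with β ⊆ α such that the skew diagram α/β is connected and every row of α/β contains at least one cell. Then the weakly advanced function 𝒜𝔖*_{α/β} is symmetric if and only if α_i = 1 for all i with ℓ(β)+1 ≤ i ≤ ℓ(α)−1. -/

import Mathlib

/-!
Formalization framework.

* A composition is a `List ℕ` of positive parts (bottom row first); a partition is a
  composition with weakly decreasing parts.
* `cells α β` is the set of cells of the skew diagram `α/β`, a cell being a pair
  `(i, j)` of a row index `i` and a column index `j` (both `0`-indexed; row `i`
  corresponds to row `i+1` of the paper, counted from the bottom).
* Tableaux are fillings `T : ℕ × ℕ → ℕ` of the cells (entries in `ℕ`, i.e. the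
  positive integers `1,2,3,…` relabelled as `0,1,2,…`, which is harmless), with `T = 0`
  off the cells.
* All the Schur-like functions are formal power series in `MvPowerSeries ℕ ℚ`
  (variables `x_i`, `i : ℕ`): the coefficient of the monomial `d : ℕ →₀ ℕ` is the
  number of admissible tableaux of content `d`.
* Such a series is symmetric iff it is invariant under every permutation of the
  variables.
-/

open scoped Classical

namespace SQS

/-- A composition: a finite list of positive integers (the parts). -/
def IsComposition (α : List ℕ) : Prop := ∀ x ∈ α, 0 < x

/-- A partition: a composition whose parts weakly decrease. -/
def IsPartitionL (α : List ℕ) : Prop := IsComposition α ∧ α.Pairwise (· ≥ ·)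

/-- `β ⊆ α` for diagrams of compositions: `β` is no longer than `α` and each part of
`β` is at most the corresponding part of `α`. -/
def Subdiagram (β α : List ℕ) : Prop :=
  β.length ≤ α.length ∧ ∀ i < β.length, β.getD i 0 ≤ α.getD i 0

/-- The cells of the skew diagram `α/β`: cell `(i, j)` (row `i` from the bottom,
column `j`, both `0`-indexed) belongs to `α/β` iff `i < ℓ(α)` and `β_i ≤ j < α_i`. -/
noncomputable def cells (α β : List ℕ) : Finset (ℕ × ℕ) :=
  (Finset.range α.length ×ˢ Finset.range (α.foldr max 0)).filter
    fun c => β.getD c.1 0 ≤ c.2 ∧ c.2 < α.getD c.1 0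

/-- The set of columns spanned by the cells of row `i` of `α/β`. -/
def colsOfRow (α β : List ℕ) (i : ℕ) : Set ℕ := {j | (i, j) ∈ cells α β}

/-- `α/β` is connected: its rows cannot be partitioned into two nonempty sets such
that the sets of columns spanned by the cells in the two sets of rows are disjoint. -/
def ConnectedDiagram (α β : List ℕ) : Prop :=
  ¬ ∃ R₁ R₂ : Set ℕ, R₁.Nonempty ∧ R₂.Nonempty ∧ Disjoint R₁ R₂ ∧
      R₁ ∪ R₂ = Set.Iio α.length ∧
      Disjoint (⋃ i ∈ R₁, colsOfRow α β i) (⋃ i ∈ R₂, colsOfRow α β i)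

/-- Every row of `α/β` contains at least one cell, i.e. `β_i < α_i` for all
`1 ≤ i ≤ ℓ(β)` (rows beyond `ℓ(β)` automatically contain cells). -/
def RowsNonempty (α β : List ℕ) : Prop := ∀ i < β.length, β.getD i 0 < α.getD i 0

/-- A filling of the cell set `s`: arbitrary entries on `s` and `0` off `s`. -/
def IsFilling (s : Finset (ℕ × ℕ)) (T : ℕ × ℕ → ℕ) : Prop := ∀ c, c ∉ s → T c = 0

/-- Row condition: any two entries in the same row, read left to right, are related
by `r`. -/
def RowCond (s : Finset (ℕ × ℕ)) (r : ℕ → ℕ → Prop) (T : ℕ × ℕ → ℕ) : Prop :=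
  ∀ i j j', (i, j) ∈ s → (i, j') ∈ s → j < j' → r (T (i, j)) (T (i, j'))

/-- Column condition: any two entries in the same column, read bottom to top, are
related by `r`. -/
def ColCond (s : Finset (ℕ × ℕ)) (r : ℕ → ℕ → Prop) (T : ℕ × ℕ → ℕ) : Prop :=
  ∀ i i' j, (i, j) ∈ s → (i', j) ∈ s → i < i' → r (T (i, j)) (T (i', j))

/-- First-column condition: any two entries in leftmost-column cells (cells of `s` in
column `0`), read bottom to top, are related by `r`. -/
def FirstColCond (s : Finset (ℕ × ℕ)) (r : ℕ → ℕ → Prop) (T : ℕ × ℕ → ℕ) : Prop :=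
  ∀ i i', (i, 0) ∈ s → (i', 0) ∈ s → i < i' → r (T (i, 0)) (T (i', 0))

/-- The content of a filling: `content s T i` is the number of cells of `s` whose
entry equals `i`. -/
noncomputable def content (s : Finset (ℕ × ℕ)) (T : ℕ × ℕ → ℕ) : ℕ →₀ ℕ :=
  ∑ c ∈ s, Finsupp.single (T c) 1

/-- The generating function `Σ_T x^T` over all fillings of `s` satisfying `P`:
the coefficient of the monomial `d` is the number of such fillings of content `d`. -/
noncomputable def genFun (s : Finset (ℕ × ℕ)) (P : (ℕ × ℕ → ℕ) → Prop) :
    MvPowerSeries ℕ ℚ :=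
  fun d => (Nat.card {T : ℕ × ℕ → ℕ // IsFilling s T ∧ P T ∧ content s T = d} : ℚ)

/-- A formal power series is symmetric iff it is invariant under every permutation of
the variables (a permutation `σ` sends the monomial `d` to `Finsupp.mapDomain σ d`). -/
def IsSymmFn (f : MvPowerSeries ℕ ℚ) : Prop :=
  ∀ (σ : Equiv.Perm ℕ) (d : ℕ →₀ ℕ),
    MvPowerSeries.coeff (R := ℚ) (Finsupp.mapDomain σ d) f = MvPowerSeries.coeff (R := ℚ) d f

/-- The (skew) Schur function of an arbitrary cell set: columns strictly increase
bottom to top, rows weakly increase left to right. -/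
noncomputable def schurOfCells (s : Finset (ℕ × ℕ)) : MvPowerSeries ℕ ℚ :=
  genFun s fun T => ColCond s (· < ·) T ∧ RowCond s (· ≤ ·) T

/-- The skew Schur function `s_{lam/mu}`. -/
noncomputable def skewSchur (lam mu : List ℕ) : MvPowerSeries ℕ ℚ :=
  schurOfCells (cells lam mu)

/-- The Schur function `s_lam`. -/
noncomputable def schurF (lam : List ℕ) : MvPowerSeries ℕ ℚ := skewSchur lam []

/-- The dual immaculate function `𝔖*_{α/β}`: first column strict, rows weak. -/
noncomputable def dualImmaculateF (α β : List ℕ) : MvPowerSeries ℕ ℚ :=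
  genFun (cells α β) fun T =>
    FirstColCond (cells α β) (· < ·) T ∧ RowCond (cells α β) (· ≤ ·) T

/-- The row-strict dual immaculate function `ℛ𝔖*_{α/β}`: first column weak, rows
strict. -/
noncomputable def rowStrictDualImmaculateF (α β : List ℕ) : MvPowerSeries ℕ ℚ :=
  genFun (cells α β) fun T =>
    FirstColCond (cells α β) (· ≤ ·) T ∧ RowCond (cells α β) (· < ·) T

/-- The extended Schur function `ε_{α/λ}`: columns strict, rows weak. -/
noncomputable def extendedSchurF (α lam : List ℕ) : MvPowerSeries ℕ ℚ :=
  genFun (cells α lam) fun T =>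
    ColCond (cells α lam) (· < ·) T ∧ RowCond (cells α lam) (· ≤ ·) T

/-- The row-strict extended Schur function `ℛε_{α/λ}`: columns weak, rows strict. -/
noncomputable def rowStrictExtendedSchurF (α lam : List ℕ) : MvPowerSeries ℕ ℚ :=
  genFun (cells α lam) fun T =>
    ColCond (cells α lam) (· ≤ ·) T ∧ RowCond (cells α lam) (· < ·) T

/-- The strictly advanced function `𝒜̄𝔖*_{α/β}`: first column strict, rows strict. -/
noncomputable def strictAdvancedF (α β : List ℕ) : MvPowerSeries ℕ ℚ :=
  genFun (cells α β) fun T =>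
    FirstColCond (cells α β) (· < ·) T ∧ RowCond (cells α β) (· < ·) T

/-- The weakly advanced function `𝒜𝔖*_{α/β}`: first column weak, rows weak. -/
noncomputable def weakAdvancedF (α β : List ℕ) : MvPowerSeries ℕ ℚ :=
  genFun (cells α β) fun T =>
    FirstColCond (cells α β) (· ≤ ·) T ∧ RowCond (cells α β) (· ≤ ·) T

/-- The strictly advanced extended function `𝒜̄ε_{α/λ}`: columns strict, rows strict. -/
noncomputable def strictAdvancedExtendedF (α lam : List ℕ) : MvPowerSeries ℕ ℚ :=
  genFun (cells α lam) fun T =>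
    ColCond (cells α lam) (· < ·) T ∧ RowCond (cells α lam) (· < ·) T

/-- The weakly advanced extended function `𝒜ε_{α/λ}`: columns weak, rows weak. -/
noncomputable def weakAdvancedExtendedF (α lam : List ℕ) : MvPowerSeries ℕ ℚ :=
  genFun (cells α lam) fun T =>
    ColCond (cells α lam) (· ≤ ·) T ∧ RowCond (cells α lam) (· ≤ ·) T


/-! ### Auxiliary infrastructure for the proof -/

section Aux

lemma getD_le_foldr_max (α : List ℕ) : ∀ i, i < α.length → α.getD i 0 ≤ α.foldr max 0 := by
  induction α with
  | nil => simp
  | cons a l ih =>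
    intro i hi
    cases i with
    | zero => simp
    | succ n =>
      simp only [List.getD_cons_succ, List.foldr_cons]
      exact le_trans (ih n (by simpa using hi)) (le_max_right _ _)

lemma mem_cells {α β : List ℕ} {c : ℕ × ℕ} :
    c ∈ cells α β ↔ c.1 < α.length ∧ β.getD c.1 0 ≤ c.2 ∧ c.2 < α.getD c.1 0 := by
  unfold cells
  simp only [Finset.mem_filter, Finset.mem_product, Finset.mem_range]
  constructor
  · rintro ⟨⟨h1, _⟩, h3, h4⟩; exact ⟨h1, h3, h4⟩
  · rintro ⟨h1, h3, h4⟩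
    exact ⟨⟨h1, lt_of_lt_of_le h4 (getD_le_foldr_max α c.1 h1)⟩, h3, h4⟩

lemma getD_pos_of_comp {α : List ℕ} (hα : IsComposition α) {i : ℕ} (hi : i < α.length) :
    0 < α.getD i 0 := by
  rw [List.getD_eq_getElem α 0 hi]
  exact hα _ (List.getElem_mem hi)

lemma content_apply (s : Finset (ℕ × ℕ)) (T : ℕ × ℕ → ℕ) (a : ℕ) :
    content s T a = ∑ c ∈ s, if T c = a then 1 else 0 := by
  unfold content
  rw [Finset.sum_apply']
  refine Finset.sum_congr rfl fun c _ => ?_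
  simp [Finsupp.single_apply]

lemma content_pos {s : Finset (ℕ × ℕ)} {T : ℕ × ℕ → ℕ} {c : ℕ × ℕ} (hc : c ∈ s) :
    0 < content s T (T c) := by
  rw [content_apply]
  refine lt_of_lt_of_le ?_ (Finset.single_le_sum (f := fun x => if T x = T c then 1 else 0)
    (fun i _ => by positivity) hc)
  simp

lemma filling_finite (s : Finset (ℕ × ℕ)) (Q : (ℕ × ℕ → ℕ) → Prop) (d : ℕ →₀ ℕ) :
    Finite {T : ℕ × ℕ → ℕ // IsFilling s T ∧ Q T ∧ content s T = d} := by
  classical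
  let V : Finset ℕ := insert 0 d.support
  have : ∀ (T : {T : ℕ × ℕ → ℕ // IsFilling s T ∧ Q T ∧ content s T = d}) (c : ℕ × ℕ),
      c ∈ s → T.1 c ∈ V := by
    intro T c hc
    by_cases h0 : T.1 c = 0
    · simp [V, h0]
    · have h1 : 0 < content s T.1 (T.1 c) := content_pos hc
      rw [T.2.2.2] at h1
      simp only [V, Finset.mem_insert, Finsupp.mem_support_iff]
      exact Or.inr (by omega)
  refine Finite.of_injective
    (fun T : {T : ℕ × ℕ → ℕ // IsFilling s T ∧ Q T ∧ content s T = d} =>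
      (fun c : {x // x ∈ s} => (⟨T.1 c.1, this T c.1 c.2⟩ : V)) : _ → ({x // x ∈ s} → V)) ?_
  intro T₁ T₂ h
  ext c
  by_cases hc : c ∈ s
  · exact congrArg Subtype.val (congrFun h ⟨c, hc⟩)
  · rw [T₁.2.1 c hc, T₂.2.1 c hc]

/-! ### Block decomposition of the cells (under the shape condition) -/

/-- Cells of the "tail" block (rows `≥ ℓ(β)`), listed in chain order. -/
def tailCell (α β : List ℕ) (t : ℕ) : ℕ × ℕ :=
  if t < α.length - 1 - β.length then (β.length + t, 0)
  else (α.length - 1, t - (α.length - 1 - β.length))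

/-- Length of the `k`-th block. -/
def blkLen (α β : List ℕ) (k : ℕ) : ℕ :=
  if k < β.length then α.getD k 0 - β.getD k 0
  else if k = β.length ∧ β.length < α.length then
    α.length - 1 - β.length + α.getD (α.length - 1) 0
  else 0

/-- The `t`-th cell of the `k`-th block. -/
def blkFun (α β : List ℕ) (k : ℕ) (t : ℕ) : ℕ × ℕ :=
  if k < β.length then (k, β.getD k 0 + t) else tailCell α β t

/-- The `k`-th block, as a list of cells in chain order. -/
def blk (α β : List ℕ) (k : ℕ) : List (ℕ × ℕ) :=
  (List.range (blkLen α β k)).map (blkFun α β k)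

lemma blk_length (α β : List ℕ) (k : ℕ) : (blk α β k).length = blkLen α β k := by
  simp [blk]

lemma blk_getElem (α β : List ℕ) (k : ℕ) {i : ℕ} (h : i < (blk α β k).length) :
    (blk α β k)[i] = blkFun α β k i := by
  simp [blk]

lemma mem_blk {α β : List ℕ} {k : ℕ} {c : ℕ × ℕ} :
    c ∈ blk α β k ↔ ∃ t < blkLen α β k, blkFun α β k t = c := by
  simp [blk, List.mem_map]

end Aux

section Blocks

variable {α β : List ℕ}

lemma blkLen_row {k : ℕ} (hk : k < β.length) :
    blkLen α β k = α.getD k 0 - β.getD k 0 := by simp [blkLen, hk]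

lemma blkLen_tail (hLM : β.length < α.length) :
    blkLen α β β.length = α.length - 1 - β.length + α.getD (α.length - 1) 0 := by
  simp [blkLen, hLM]

lemma blkLen_zero {k : ℕ} (hk : ¬ k < β.length) (hk2 : ¬ (k = β.length ∧ β.length < α.length)) :
    blkLen α β k = 0 := by
  rw [blkLen, if_neg hk, if_neg hk2]

lemma blkFun_mem_cells (hα : IsComposition α) (hsub : Subdiagram β α)
    {k t : ℕ} (ht : t < blkLen α β k) : blkFun α β k t ∈ cells α β := by
  rw [mem_cells]
  by_cases hk : k < β.length
  · rw [blkLen_row hk] at ht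
    simp only [blkFun, if_pos hk]
    exact ⟨lt_of_lt_of_le hk hsub.1, by omega, by omega⟩
  · by_cases hk2 : k = β.length ∧ β.length < α.length
    · obtain ⟨rfl, hLM⟩ := hk2
      rw [blkLen_tail hLM] at ht
      simp only [blkFun, if_neg hk, tailCell]
      by_cases htB : t < α.length - 1 - β.length
      · rw [if_pos htB]
        dsimp only
        refine ⟨by omega, ?_, ?_⟩
        · rw [List.getD_eq_default _ _ (by omega)]
        · exact getD_pos_of_comp hα (by omega)
      · rw [if_neg htB]
        dsimp only
        refine ⟨by omega, ?_, by omega⟩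
        rw [List.getD_eq_default _ _ (by omega)]
        omega
    · rw [blkLen_zero hk hk2] at ht; omega

lemma fst_of_mem_blk {k : ℕ} {c : ℕ × ℕ} (hc : c ∈ blk α β k) :
    min c.1 β.length = k := by
  rw [mem_blk] at hc
  obtain ⟨t, ht, rfl⟩ := hc
  by_cases hk : k < β.length
  · simp only [blkFun, if_pos hk]; omega
  · have hk2 : k = β.length ∧ β.length < α.length := by
      by_contra h
      rw [blkLen_zero hk h] at ht; omega
    simp only [blkFun, if_neg hk, tailCell]
    by_cases htB : t < α.length - 1 - β.length
    · rw [if_pos htB]; simp only; omega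
    · rw [if_neg htB]; simp only; omega

lemma mem_blk_of_mem_cells (hβ : IsComposition β)
    (hC : ∀ i, β.length ≤ i → i + 1 < α.length → α.getD i 0 = 1)
    {c : ℕ × ℕ} (hc : c ∈ cells α β) : c ∈ blk α β (min c.1 β.length) := by
  obtain ⟨i, j⟩ := c
  rw [mem_cells] at hc
  obtain ⟨h1, h2, h3⟩ := hc
  simp only at h1 h2 h3 ⊢
  rw [mem_blk]
  by_cases hk : i < β.length
  · have hmin : min i β.length = i := by omega
    rw [hmin]
    refine ⟨j - β.getD i 0, ?_, ?_⟩
    · rw [blkLen_row hk]; omega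
    · simp only [blkFun, if_pos hk, Prod.mk.injEq]
      refine ⟨?_, ?_⟩ <;> first | trivial | omega
  · have hLi : β.length ≤ i := by omega
    have hLM : β.length < α.length := by omega
    have hmin : min i β.length = β.length := by omega
    rw [hmin]
    by_cases hi2 : i < α.length - 1
    · have hj : j = 0 := by
        have := hC i hLi (by omega); omega
      refine ⟨i - β.length, ?_, ?_⟩
      · rw [blkLen_tail hLM]; omega
      · simp only [blkFun, if_neg (by omega : ¬ β.length < β.length), tailCell,
          if_pos (by omega : i - β.length < α.length - 1 - β.length), Prod.mk.injEq]
        refine ⟨?_, ?_⟩ <;> first | trivial | omega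
    · have hi3 : i = α.length - 1 := by omega
      refine ⟨α.length - 1 - β.length + j, ?_, ?_⟩
      · rw [blkLen_tail hLM]
        have : j < α.getD (α.length - 1) 0 := by rw [← hi3]; exact h3
        omega
      · simp only [blkFun, if_neg (by omega : ¬ β.length < β.length), tailCell,
          if_neg (by omega : ¬ α.length - 1 - β.length + j < α.length - 1 - β.length),
          Prod.mk.injEq]
        refine ⟨?_, ?_⟩ <;> first | trivial | omega

lemma blk_nodup (α β : List ℕ) (k : ℕ) : (blk α β k).Nodup := by
  apply List.Nodup.map_on ?_ List.nodup_range
  intro t ht t' ht' h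
  by_cases hk : k < β.length
  · simp only [blkFun, if_pos hk, Prod.mk.injEq] at h; omega
  · simp only [blkFun, if_neg hk, tailCell] at h
    split_ifs at h with h1 h2 h2 <;> (rw [Prod.mk.injEq] at h; omega)

lemma cells_eq_biUnion (hα : IsComposition α) (hβ : IsComposition β) (hsub : Subdiagram β α)
    (hC : ∀ i, β.length ≤ i → i + 1 < α.length → α.getD i 0 = 1) :
    cells α β = (Finset.range (β.length + 1)).biUnion (fun k => (blk α β k).toFinset) := by
  ext c
  simp only [Finset.mem_biUnion, Finset.mem_range, List.mem_toFinset]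
  constructor
  · intro hc
    exact ⟨min c.1 β.length, by omega, mem_blk_of_mem_cells hβ hC hc⟩
  · rintro ⟨k, -, hk⟩
    rw [mem_blk] at hk
    obtain ⟨t, ht, rfl⟩ := hk
    exact blkFun_mem_cells hα hsub ht

lemma blk_pairwiseDisjoint (α β : List ℕ) :
    (↑(Finset.range (β.length + 1)) : Set ℕ).PairwiseDisjoint
      (fun k => (blk α β k).toFinset) := by
  intro k _ k' _ hkk'
  simp only [Function.onFun]
  rw [Finset.disjoint_left]
  intro c hc hc'
  rw [List.mem_toFinset] at hc hc'
  exact hkk' ((fst_of_mem_blk hc).symm.trans (fst_of_mem_blk hc'))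

lemma sum_cells {N : Type*} [AddCommMonoid N] (hα : IsComposition α) (hβ : IsComposition β)
    (hsub : Subdiagram β α)
    (hC : ∀ i, β.length ≤ i → i + 1 < α.length → α.getD i 0 = 1) (g : ℕ × ℕ → N) :
    ∑ c ∈ cells α β, g c = ∑ k ∈ Finset.range (β.length + 1), ((blk α β k).map g).sum := by
  rw [cells_eq_biUnion hα hβ hsub hC, Finset.sum_biUnion (blk_pairwiseDisjoint α β)]
  exact Finset.sum_congr rfl fun k _ => List.sum_toFinset _ (blk_nodup α β k)

lemma sorted_blk_iff (k : ℕ) (T : ℕ × ℕ → ℕ) :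
    ((blk α β k).map T).Pairwise (· ≤ ·) ↔
      ∀ t t', t < t' → t' < blkLen α β k → T (blkFun α β k t) ≤ T (blkFun α β k t') := by
  rw [List.pairwise_iff_getElem]
  constructor
  · intro h t t' htt' ht'
    have := h t t' (by simpa [blk] using (by omega : t < blkLen α β k)) (by simpa [blk] using ht') htt'
    simpa [blk] using this
  · intro h i j hi hj hij
    have hj' : j < blkLen α β k := by simpa [blk] using hj
    simpa [blk] using h i j hij hj'

end Blocks

section Adm

variable {α β : List ℕ}

lemma tail_col_cell (hα : IsComposition α) {i : ℕ} (hLi : β.length ≤ i) (hiM : i < α.length) :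
    blkFun α β β.length (if i < α.length - 1 then i - β.length else α.length - 1 - β.length)
      = (i, 0) := by
  have hne : ¬ β.length < β.length := by omega
  by_cases hi2 : i < α.length - 1
  · rw [if_pos hi2]
    simp only [blkFun, if_neg hne, tailCell,
      if_pos (by omega : i - β.length < α.length - 1 - β.length), Prod.mk.injEq]
    refine ⟨?_, ?_⟩ <;> first | trivial | omega
  · have hi3 : i = α.length - 1 := by omega
    rw [if_neg hi2]
    simp only [blkFun, if_neg hne, tailCell,
      if_neg (by omega : ¬ α.length - 1 - β.length < α.length - 1 - β.length), Prod.mk.injEq]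
    refine ⟨?_, ?_⟩ <;> first | trivial | omega

lemma col_cell_row_ge (hβ : IsComposition β) {i : ℕ} (h : (i, 0) ∈ cells α β) :
    β.length ≤ i := by
  rw [mem_cells] at h
  dsimp only at h
  by_contra hlt
  have := getD_pos_of_comp hβ (by omega : i < β.length)
  omega

lemma adm_iff_blocks (hα : IsComposition α) (hβ : IsComposition β) (hsub : Subdiagram β α)
    (hC : ∀ i, β.length ≤ i → i + 1 < α.length → α.getD i 0 = 1) (T : ℕ × ℕ → ℕ) :
    (FirstColCond (cells α β) (· ≤ ·) T ∧ RowCond (cells α β) (· ≤ ·) T) ↔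
      ∀ k, ((blk α β k).map T).Pairwise (· ≤ ·) := by
  constructor
  · rintro ⟨hF, hR⟩ k
    rw [sorted_blk_iff]
    intro t t' htt' ht'
    have hmt : t < blkLen α β k := by omega
    have hmemt := blkFun_mem_cells hα hsub hmt
    have hmemt' := blkFun_mem_cells hα hsub ht'
    by_cases hk : k < β.length
    · simp only [blkFun, if_pos hk] at hmemt hmemt' ⊢
      exact hR k _ _ hmemt hmemt' (by omega)
    · have hk2 : k = β.length ∧ β.length < α.length := by
        by_contra h
        rw [blkLen_zero hk h] at ht'; omega
      obtain ⟨rfl, hLM⟩ := hk2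
      rw [blkLen_tail hLM] at ht'
      have hα1 : 0 < α.getD (α.length - 1) 0 := getD_pos_of_comp hα (by omega)
      have htop : (α.length - 1, 0) ∈ cells α β := by
        rw [mem_cells]
        exact ⟨by omega, by rw [List.getD_eq_default _ _ (by omega)], hα1⟩
      simp only [blkFun, if_neg hk, tailCell] at hmemt hmemt' ⊢
      by_cases h1 : t < α.length - 1 - β.length
      · rw [if_pos h1] at hmemt ⊢
        by_cases h2 : t' < α.length - 1 - β.length
        · rw [if_pos h2] at hmemt' ⊢
          exact hF _ _ hmemt hmemt' (by omega)
        · rw [if_neg h2] at hmemt' ⊢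
          have step1 : T (β.length + t, 0) ≤ T (α.length - 1, 0) :=
            hF _ _ hmemt htop (by omega)
          by_cases h3 : t' = α.length - 1 - β.length
          · have : t' - (α.length - 1 - β.length) = 0 := by omega
            rw [this]
            exact step1
          · exact le_trans step1 (hR _ _ _ htop hmemt' (by omega))
      · rw [if_neg h1] at hmemt ⊢
        have h2 : ¬ t' < α.length - 1 - β.length := by omega
        rw [if_neg h2] at hmemt' ⊢
        exact hR _ _ _ hmemt hmemt' (by omega)
  · intro hS
    constructor
    · intro i i' hi hi' hii'
      have hLi : β.length ≤ i := col_cell_row_ge hβ hi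
      have hLi' : β.length ≤ i' := col_cell_row_ge hβ hi'
      rw [mem_cells] at hi hi'
      dsimp only at hi hi'
      have hiM : i < α.length := hi.1
      have hiM' : i' < α.length := hi'.1
      have hLM : β.length < α.length := by omega
      have hα1 : 0 < α.getD (α.length - 1) 0 := getD_pos_of_comp hα (by omega)
      have h := (sorted_blk_iff β.length T).1 (hS β.length)
        (if i < α.length - 1 then i - β.length else α.length - 1 - β.length)
        (if i' < α.length - 1 then i' - β.length else α.length - 1 - β.length)
        (by split_ifs <;> omega)
        (by rw [blkLen_tail hLM]; split_ifs <;> omega)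
      rwa [tail_col_cell hα hLi hiM, tail_col_cell hα hLi' hiM'] at h
    · intro i j j' hj hj' hjj'
      rw [mem_cells] at hj hj'
      dsimp only at hj hj'
      by_cases hk : i < β.length
      · have h := (sorted_blk_iff i T).1 (hS i) (j - β.getD i 0) (j' - β.getD i 0)
          (by omega) (by rw [blkLen_row hk]; omega)
        have e1 : blkFun α β i (j - β.getD i 0) = (i, j) := by
          simp only [blkFun, if_pos hk, Prod.mk.injEq]
          refine ⟨?_, ?_⟩ <;> first | trivial | omega
        have e2 : blkFun α β i (j' - β.getD i 0) = (i, j') := by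
          simp only [blkFun, if_pos hk, Prod.mk.injEq]
          refine ⟨?_, ?_⟩ <;> first | trivial | omega
        rwa [e1, e2] at h
      · have hLi : β.length ≤ i := by omega
        have hLM : β.length < α.length := by omega
        by_cases hi2 : i < α.length - 1
        · have := hC i hLi (by omega)
          omega
        · have hi3 : i = α.length - 1 := by omega
          have hje : j' < α.getD (α.length - 1) 0 := by rw [← hi3]; exact hj'.2.2
          have hne : ¬ β.length < β.length := by omega
          have h := (sorted_blk_iff β.length T).1 (hS β.length)
            (α.length - 1 - β.length + j) (α.length - 1 - β.length + j')
            (by omega) (by rw [blkLen_tail hLM]; omega)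
          have e1 : blkFun α β β.length (α.length - 1 - β.length + j) = (i, j) := by
            simp only [blkFun, if_neg hne, tailCell,
              if_neg (by omega : ¬ α.length - 1 - β.length + j < α.length - 1 - β.length),
              Prod.mk.injEq]
            refine ⟨?_, ?_⟩ <;> first | trivial | omega
          have e2 : blkFun α β β.length (α.length - 1 - β.length + j') = (i, j') := by
            simp only [blkFun, if_neg hne, tailCell,
              if_neg (by omega : ¬ α.length - 1 - β.length + j' < α.length - 1 - β.length),
              Prod.mk.injEq]
            refine ⟨?_, ?_⟩ <;> first | trivial | omega
          rwa [e1, e2] at h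

end Adm

section Resort

variable {α β : List ℕ}

/-- Resorting a filling: within each block, replace the entries by the same multiset of
entries arranged weakly increasingly. -/
noncomputable def resort (α β : List ℕ) (f : ℕ × ℕ → ℕ) (c : ℕ × ℕ) : ℕ :=
  if c ∈ cells α β then
    (Multiset.sort (((blk α β (min c.1 β.length)).map f : List ℕ) : Multiset ℕ) (· ≤ ·)).getD
      (@List.idxOf _ instBEqOfDecidableEq c (blk α β (min c.1 β.length))) 0
  else 0

lemma resort_map (hα : IsComposition α) (hsub : Subdiagram β α) (f : ℕ × ℕ → ℕ) (k : ℕ) :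
    (blk α β k).map (resort α β f) =
      Multiset.sort (((blk α β k).map f : List ℕ) : Multiset ℕ) (· ≤ ·) := by
  apply List.ext_getElem
  · simp [Multiset.length_sort]
  · intro i h1 h2
    have hi : i < (blk α β k).length := by simpa using h1
    have hmem : (blk α β k)[i] ∈ blk α β k := List.getElem_mem hi
    have hkey : min ((blk α β k)[i]).1 β.length = k := fst_of_mem_blk hmem
    have hcells : (blk α β k)[i] ∈ cells α β := by
      rw [blk_getElem α β k hi]
      exact blkFun_mem_cells hα hsub (by rw [← blk_length α β k]; exact hi)
    rw [List.getElem_map, resort, if_pos hcells, hkey]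
    have hidx : @List.idxOf _ instBEqOfDecidableEq ((blk α β k)[i]) (blk α β k) = i :=
      @List.Nodup.idxOf_getElem _ instBEqOfDecidableEq _ _ (blk_nodup α β k) i hi
    rw [hidx, List.getD_eq_getElem _ _ (by simpa using h2)]

lemma resort_sorted (hα : IsComposition α) (hsub : Subdiagram β α) (f : ℕ × ℕ → ℕ) (k : ℕ) :
    ((blk α β k).map (resort α β f)).Pairwise (· ≤ ·) := by
  rw [resort_map hα hsub]
  exact Multiset.pairwise_sort _ _

lemma resort_perm (hα : IsComposition α) (hsub : Subdiagram β α) (f : ℕ × ℕ → ℕ) (k : ℕ) :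
    ((blk α β k).map (resort α β f)).Perm ((blk α β k).map f) := by
  rw [resort_map hα hsub]
  exact Multiset.coe_eq_coe.1 (Multiset.sort_eq _ _)

lemma resort_filling (f : ℕ × ℕ → ℕ) : IsFilling (cells α β) (resort α β f) :=
  fun c hc => by rw [resort, if_neg hc]

lemma content_resort (hα : IsComposition α) (hβ : IsComposition β) (hsub : Subdiagram β α)
    (hC : ∀ i, β.length ≤ i → i + 1 < α.length → α.getD i 0 = 1) (f : ℕ × ℕ → ℕ) :
    content (cells α β) (resort α β f) = content (cells α β) f := by
  unfold content
  rw [sum_cells hα hβ hsub hC, sum_cells hα hβ hsub hC]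
  refine Finset.sum_congr rfl fun k _ => ?_
  have hperm := resort_perm hα hsub f k
  calc ((blk α β k).map fun c => Finsupp.single (resort α β f c) 1).sum
      = (((blk α β k).map (resort α β f)).map fun v => Finsupp.single v 1).sum := by
        rw [List.map_map]; rfl
    _ = (((blk α β k).map f).map fun v => Finsupp.single v 1).sum := (hperm.map _).sum_eq
    _ = ((blk α β k).map fun c => Finsupp.single (f c) 1).sum := by rw [List.map_map]; rfl

lemma content_comp (s : Finset (ℕ × ℕ)) (σ : Equiv.Perm ℕ) (T : ℕ × ℕ → ℕ) :
    content s (⇑σ ∘ T) = Finsupp.mapDomain (⇑σ) (content s T) := by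
  unfold content
  rw [Finsupp.mapDomain_finset_sum]
  exact Finset.sum_congr rfl fun c _ => by simp [Finsupp.mapDomain_single]

lemma resort_resort (hα : IsComposition α) (hβ : IsComposition β) (hsub : Subdiagram β α)
    (hC : ∀ i, β.length ≤ i → i + 1 < α.length → α.getD i 0 = 1) (σ : Equiv.Perm ℕ)
    (T : ℕ × ℕ → ℕ) (hfill : IsFilling (cells α β) T)
    (hsort : ∀ k, ((blk α β k).map T).Pairwise (· ≤ ·)) :
    resort α β (⇑σ.symm ∘ resort α β (⇑σ ∘ T)) = T := by
  funext c
  by_cases hc : c ∈ cells α β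
  · have hmem := mem_blk_of_mem_cells hβ hC hc
    set k := min c.1 β.length with hk
    have hmapeq : (blk α β k).map (resort α β (⇑σ.symm ∘ resort α β (⇑σ ∘ T)))
        = (blk α β k).map T := by
      rw [resort_map hα hsub]
      have h1 : ((blk α β k).map (⇑σ.symm ∘ resort α β (⇑σ ∘ T))).Perm ((blk α β k).map T) := by
        have h3 := (resort_perm hα hsub (⇑σ ∘ T) k).map ⇑σ.symm
        rw [List.map_map, List.map_map] at h3
        have h4 : (blk α β k).map (⇑σ.symm ∘ ⇑σ ∘ T) = (blk α β k).map T := by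
          apply List.map_inj_left.2
          intro a _
          simp
        rwa [h4] at h3
      rw [Multiset.coe_eq_coe.2 h1]
      exact List.Perm.eq_of_pairwise' (Multiset.pairwise_sort _ _) (hsort k)
        (Multiset.coe_eq_coe.1 (Multiset.sort_eq _ _))
    exact List.map_inj_left.1 hmapeq c hmem
  · rw [hfill c hc, resort, if_neg hc]

lemma symm_of_cond (hα : IsComposition α) (hβ : IsComposition β) (hsub : Subdiagram β α)
    (hC : ∀ i, β.length ≤ i → i + 1 < α.length → α.getD i 0 = 1) :
    IsSymmFn (weakAdvancedF α β) := by
  intro σ d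
  have hinv : ∀ (τ : Equiv.Perm ℕ) (e : ℕ →₀ ℕ),
      Finsupp.mapDomain (⇑τ.symm) (Finsupp.mapDomain (⇑τ) e) = e := by
    intro τ e
    rw [← Finsupp.mapDomain_comp]
    have h5 : ⇑τ.symm ∘ ⇑τ = id := by ext x; simp
    rw [h5, Finsupp.mapDomain_id]
  rw [MvPowerSeries.coeff_apply, MvPowerSeries.coeff_apply]
  unfold weakAdvancedF genFun
  congr 1
  refine Nat.card_congr (Equiv.symm ?_)
  refine ⟨fun T => ⟨resort α β (⇑σ ∘ T.1), resort_filling _, ?_, ?_⟩,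
    fun T => ⟨resort α β (⇑σ.symm ∘ T.1), resort_filling _, ?_, ?_⟩, ?_, ?_⟩
  · exact (adm_iff_blocks hα hβ hsub hC _).2 fun k => resort_sorted hα hsub _ k
  · rw [content_resort hα hβ hsub hC, content_comp, T.2.2.2]
  · exact (adm_iff_blocks hα hβ hsub hC _).2 fun k => resort_sorted hα hsub _ k
  · rw [content_resort hα hβ hsub hC, content_comp, T.2.2.2, hinv]
  · intro T
    apply Subtype.ext
    exact resort_resort hα hβ hsub hC σ T.1 T.2.1 ((adm_iff_blocks hα hβ hsub hC _).1 T.2.2.1)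
  · intro T
    apply Subtype.ext
    have := resort_resort hα hβ hsub hC σ.symm T.1 T.2.1
      ((adm_iff_blocks hα hβ hsub hC _).1 T.2.2.1)
    simpa using this

end Resort

section OnlyIf

variable {α β : List ℕ}

lemma start_mem_cells (hα : IsComposition α) (hrows : RowsNonempty α β) {i : ℕ}
    (hi : i < α.length) : (i, β.getD i 0) ∈ cells α β := by
  rw [mem_cells]
  dsimp only
  refine ⟨hi, le_refl _, ?_⟩
  by_cases hiL : i < β.length
  · exact hrows i hiL
  · rw [List.getD_eq_default _ _ (by omega)]
    exact getD_pos_of_comp hα hi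

lemma end_mem_cells (hα : IsComposition α) (hrows : RowsNonempty α β) {i : ℕ}
    (hi : i < α.length) : (i, α.getD i 0 - 1) ∈ cells α β := by
  rw [mem_cells]
  dsimp only
  have hpos := getD_pos_of_comp hα hi
  refine ⟨hi, ?_, by omega⟩
  by_cases hiL : i < β.length
  · have := hrows i hiL; omega
  · rw [List.getD_eq_default _ _ (by omega)]
    omega

lemma indicator_adm {c : ℕ × ℕ}
    (hmax : ∀ c' ∈ cells α β, c'.1 = c.1 → c'.2 ≤ c.2)
    (hcol : ∀ i', (i', 0) ∈ cells α β → c.2 = 0 → i' ≤ c.1) :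
    FirstColCond (cells α β) (· ≤ ·) (fun x => if x = c then 1 else 0) ∧
      RowCond (cells α β) (· ≤ ·) (fun x => if x = c then 1 else 0) := by
  constructor
  · intro i i' h h' hlt
    by_cases hic : (i, 0) = c
    · exfalso
      have h2 := hcol i' h' (by rw [← hic])
      rw [← hic] at h2
      dsimp only at h2
      omega
    · simp only [if_neg hic]
      exact Nat.zero_le _
  · intro i j j' h h' hlt
    by_cases hic : (i, j) = c
    · exfalso
      have h2 := hmax (i, j') h' (by rw [← hic])
      rw [← hic] at h2
      dsimp only at h2
      omega
    · simp only [if_neg hic]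
      exact Nat.zero_le _

lemma content_indicator {s : Finset (ℕ × ℕ)} {c : ℕ × ℕ} (hc : c ∈ s) :
    content s (fun x => if x = c then 1 else 0) =
      Finsupp.single 0 (s.card - 1) + Finsupp.single 1 1 := by
  classical
  unfold content
  rw [← Finset.add_sum_erase _ _ hc]
  dsimp only
  rw [if_pos rfl]
  have h1 : ∀ x ∈ s.erase c, (Finsupp.single (if x = c then 1 else 0) 1 : ℕ →₀ ℕ)
      = Finsupp.single 0 1 := fun x hx => by rw [if_neg (Finset.ne_of_mem_erase hx)]
  rw [Finset.sum_congr rfl h1, Finset.sum_const, Finset.card_erase_of_mem hc, add_comm]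
  congr 1
  rw [Finsupp.smul_single, smul_eq_mul, mul_one]

/-- Upper bound: at most `ℓ(β)+1` admissible fillings with a single `0` entry. -/
lemma card_one_zero_le (hα : IsComposition α) (hβ : IsComposition β)
    (hrows : RowsNonempty α β) (hLM : β.length < α.length) (m : ℕ) :
    Nat.card {T : ℕ × ℕ → ℕ // IsFilling (cells α β) T ∧
      (FirstColCond (cells α β) (· ≤ ·) T ∧ RowCond (cells α β) (· ≤ ·) T) ∧
      content (cells α β) T = Finsupp.single 1 m + Finsupp.single 0 1} ≤ β.length + 1 := by
  classical
  set Y := {T : ℕ × ℕ → ℕ // IsFilling (cells α β) T ∧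
      (FirstColCond (cells α β) (· ≤ ·) T ∧ RowCond (cells α β) (· ≤ ·) T) ∧
      content (cells α β) T = Finsupp.single 1 m + Finsupp.single 0 1} with hY
  set C : Finset (ℕ × ℕ) :=
    ((Finset.range β.length).image fun i => (i, β.getD i 0)) ∪ {(β.length, 0)} with hC
  have hcont0 : ∀ T : Y, content (cells α β) T.1 0 = 1 := by
    intro T
    rw [T.2.2.2]
    simp [Finsupp.single_apply]
  have hzero : ∀ T : Y, ∃ c, c ∈ cells α β ∧ T.1 c = 0 := by
    intro T
    by_contra h
    push_neg at h
    have h1 := hcont0 T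
    rw [content_apply] at h1
    rw [Finset.sum_eq_zero (fun c hc => by rw [if_neg (h c hc)])] at h1
    omega
  choose z hz1 hz2 using hzero
  have huniq : ∀ (T : Y) (c' : ℕ × ℕ), c' ∈ cells α β → T.1 c' = 0 → c' = z T := by
    intro T c' hc' h0'
    by_contra hne
    have h2 : 2 ≤ ∑ c ∈ cells α β, (if T.1 c = 0 then 1 else 0) := by
      have hsub2 : ({c', z T} : Finset (ℕ × ℕ)) ⊆ cells α β := by
        intro x hx
        simp only [Finset.mem_insert, Finset.mem_singleton] at hx
        rcases hx with rfl | rfl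
        exacts [hc', hz1 T]
      calc 2 = ∑ c ∈ ({c', z T} : Finset (ℕ × ℕ)), (if T.1 c = 0 then 1 else 0) := by
              rw [Finset.sum_pair hne, if_pos h0', if_pos (hz2 T)]
        _ ≤ _ := Finset.sum_le_sum_of_subset hsub2
    have h1 := hcont0 T
    rw [content_apply] at h1
    omega
  have hzsnd : ∀ T : Y, (z T).2 = β.getD (z T).1 0 := by
    intro T
    have hcz := hz1 T
    have hc2 := (mem_cells.1 hcz).2.1
    by_contra hne
    have hlt : β.getD (z T).1 0 < (z T).2 := by omega
    have hstart := start_mem_cells hα hrows (mem_cells.1 hcz).1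
    have hcz' : ((z T).1, (z T).2) ∈ cells α β := by rw [Prod.mk.eta]; exact hcz
    have hrc := T.2.2.1.2 (z T).1 (β.getD (z T).1 0) (z T).2 hstart hcz' hlt
    have h0 : T.1 ((z T).1, β.getD (z T).1 0) = 0 := by
      have : T.1 ((z T).1, (z T).2) = 0 := by rw [Prod.mk.eta]; exact hz2 T
      omega
    have := huniq T _ hstart h0
    have := congrArg Prod.snd this
    dsimp only at this
    omega
  have hzC : ∀ T : Y, z T ∈ C := by
    intro T
    by_cases hk : (z T).1 < β.length
    · rw [hC]
      refine Finset.mem_union_left _ ?_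
      rw [Finset.mem_image]
      refine ⟨(z T).1, Finset.mem_range.2 hk, ?_⟩
      rw [← hzsnd T, Prod.mk.eta]
    · have hz0 : (z T).2 = 0 := by
        rw [hzsnd T, List.getD_eq_default _ _ (by omega)]
      have hzfst : (z T).1 = β.length := by
        by_contra hne
        have hgt : β.length < (z T).1 := by omega
        have hLmem : (β.length, 0) ∈ cells α β := by
          rw [mem_cells]
          dsimp only
          refine ⟨hLM, by rw [List.getD_eq_default _ _ (le_refl _)], getD_pos_of_comp hα hLM⟩
        have hzmem : ((z T).1, 0) ∈ cells α β := by
          have h' : ((z T).1, (z T).2) ∈ cells α β := by rw [Prod.mk.eta]; exact hz1 T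
          rwa [hz0] at h'
        have hfc := T.2.2.1.1 β.length (z T).1 hLmem hzmem hgt
        have hz00 : T.1 ((z T).1, 0) = 0 := by
          have h' : T.1 ((z T).1, (z T).2) = 0 := by rw [Prod.mk.eta]; exact hz2 T
          rwa [hz0] at h'
        have h0 : T.1 (β.length, 0) = 0 := by omega
        have := congrArg Prod.fst (huniq T _ hLmem h0)
        dsimp only at this
        omega
      rw [hC]
      refine Finset.mem_union_right _ ?_
      rw [Finset.mem_singleton]
      rw [← hzfst, ← hz0, Prod.mk.eta]
  have hval : ∀ (T : Y) (c : ℕ × ℕ), c ∈ cells α β → T.1 c = 0 ∨ T.1 c = 1 := by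
    intro T c hc
    have hp : 0 < content (cells α β) T.1 (T.1 c) := content_pos hc
    rw [T.2.2.2] at hp
    by_contra hcon
    push_neg at hcon
    rw [Finsupp.add_apply, Finsupp.single_apply, Finsupp.single_apply,
      if_neg (by omega), if_neg (by omega)] at hp
    omega
  have hinj : Function.Injective (fun T : Y => (⟨z T, hzC T⟩ : {x // x ∈ C})) := by
    intro T₁ T₂ h
    have hzz : z T₁ = z T₂ := congrArg Subtype.val h
    apply Subtype.ext
    funext c
    by_cases hc : c ∈ cells α β
    · rcases hval T₁ c hc with h1 | h1
      · have e1 : c = z T₁ := huniq T₁ c hc h1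
        have h2 : T₂.1 c = 0 := by rw [e1, hzz]; exact hz2 T₂
        rw [h1, h2]
      · rcases hval T₂ c hc with h2 | h2
        · have e2 : c = z T₂ := huniq T₂ c hc h2
          have : T₁.1 c = 0 := by rw [e2, ← hzz]; exact hz2 T₁
          omega
        · rw [h1, h2]
    · rw [T₁.2.1 c hc, T₂.2.1 c hc]
  have hCcard : C.card ≤ β.length + 1 := by
    refine le_trans (Finset.card_union_le _ _) ?_
    have h1 := Finset.card_image_le (s := Finset.range β.length)
      (f := fun i => (i, β.getD i 0))
    simp only [Finset.card_range] at h1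
    simp only [Finset.card_singleton]
    omega
  calc Nat.card Y ≤ Nat.card {x // x ∈ C} := Nat.card_le_card_of_injective _ hinj
    _ = C.card := Nat.card_eq_finsetCard C
    _ ≤ β.length + 1 := hCcard

/-- Lower bound: if a middle row of the tail has length `≥ 2`, there are at least
`ℓ(β)+2` admissible fillings with a single `1` entry. -/
lemma not_symm_of_bad (hα : IsComposition α) (hβ : IsComposition β) (hsub : Subdiagram β α)
    (hrows : RowsNonempty α β) {i₀ : ℕ} (hi₀L : β.length ≤ i₀) (hi₀M : i₀ + 1 < α.length)
    (hi₀2 : 2 ≤ α.getD i₀ 0) : ¬ IsSymmFn (weakAdvancedF α β) := by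
  intro hsym
  classical
  have hLM : β.length < α.length := by omega
  set n := (cells α β).card with hn
  set eC : ℕ → ℕ × ℕ := fun m =>
    if m < β.length then (m, α.getD m 0 - 1)
    else if m = β.length then (i₀, α.getD i₀ 0 - 1)
    else (α.length - 1, α.getD (α.length - 1) 0 - 1) with heC
  have heCmem : ∀ m, eC m ∈ cells α β := by
    intro m
    rw [heC]
    dsimp only
    split_ifs with h1 h2
    · exact end_mem_cells hα hrows (by omega)
    · exact end_mem_cells hα hrows (by omega)
    · exact end_mem_cells hα hrows (by omega)
  have hsnd : ∀ m, (eC m).2 = α.getD (eC m).1 0 - 1 := by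
    intro m
    rw [heC]
    dsimp only
    split_ifs <;> rfl
  have heCinj : ∀ m m', m < β.length + 2 → m' < β.length + 2 → eC m = eC m' → m = m' := by
    intro m m' hm hm' h
    have hf := congrArg Prod.fst h
    rw [heC] at hf
    dsimp only at hf
    split_ifs at hf <;> dsimp only at hf <;> omega
  have hmax : ∀ m, ∀ c' ∈ cells α β, c'.1 = (eC m).1 → c'.2 ≤ (eC m).2 := by
    intro m c' hc' hfst
    rw [mem_cells] at hc'
    rw [hsnd m, ← hfst]
    omega
  have hcol : ∀ m, ∀ i', (i', 0) ∈ cells α β → (eC m).2 = 0 → i' ≤ (eC m).1 := by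
    intro m i' hi' h0
    have hfst1 : (eC m).1 = α.length - 1 ∨ 2 ≤ α.getD (eC m).1 0 := by
      rw [heC]
      dsimp only
      split_ifs with h1 h2
      · right
        dsimp only
        have hb := getD_pos_of_comp hβ h1
        have hr := hrows m h1
        omega
      · right
        dsimp only
        omega
      · left
        rfl
    rcases hfst1 with h | h2
    · rw [mem_cells] at hi'
      dsimp only at hi'
      rw [h]
      omega
    · exfalso
      have := hsnd m
      omega
  -- the `ℓ(β)+2` fillings with one entry `1`
  have hmemX : ∀ m, IsFilling (cells α β) (fun x => if x = eC m then 1 else 0)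
      ∧ (FirstColCond (cells α β) (· ≤ ·) (fun x => if x = eC m then 1 else 0)
          ∧ RowCond (cells α β) (· ≤ ·) (fun x => if x = eC m then 1 else 0))
      ∧ content (cells α β) (fun x => if x = eC m then 1 else 0)
          = Finsupp.single 0 (n - 1) + Finsupp.single 1 1 := by
    intro m
    refine ⟨?_, indicator_adm (hmax m) (hcol m), ?_⟩
    · intro c hc
      have hne : c ≠ eC m := by rintro rfl; exact hc (heCmem m)
      show (if c = eC m then 1 else 0) = 0
      rw [if_neg hne]
    · rw [content_indicator (heCmem m)]
  haveI hfin := filling_finite (cells α β)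
    (fun T => FirstColCond (cells α β) (· ≤ ·) T ∧ RowCond (cells α β) (· ≤ ·) T)
    (Finsupp.single 0 (n - 1) + Finsupp.single 1 1)
  have hLB : β.length + 2 ≤ Nat.card {T : ℕ × ℕ → ℕ // IsFilling (cells α β) T ∧
      (FirstColCond (cells α β) (· ≤ ·) T ∧ RowCond (cells α β) (· ≤ ·) T) ∧
      content (cells α β) T = Finsupp.single 0 (n - 1) + Finsupp.single 1 1} := by
    have hinj : Function.Injective (fun m : Fin (β.length + 2) =>
        (⟨fun x => if x = eC m.1 then 1 else 0, hmemX m.1⟩ :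
          {T : ℕ × ℕ → ℕ // IsFilling (cells α β) T ∧
            (FirstColCond (cells α β) (· ≤ ·) T ∧ RowCond (cells α β) (· ≤ ·) T) ∧
            content (cells α β) T = Finsupp.single 0 (n - 1) + Finsupp.single 1 1})) := by
      intro m m' h
      have h2 := congrArg (fun T => T.1 (eC m.1)) h
      dsimp only at h2
      rw [if_pos rfl] at h2
      by_cases he : eC m.1 = eC m'.1
      · exact Fin.ext (heCinj _ _ m.2 m'.2 he)
      · rw [if_neg he] at h2
        omega
    have := Nat.card_le_card_of_injective _ hinj
    simpa using this
  -- symmetry transports the coefficient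
  have hswap := hsym (Equiv.swap 0 1) (Finsupp.single 0 (n - 1) + Finsupp.single 1 1)
  have hmd : Finsupp.mapDomain (⇑(Equiv.swap 0 1))
      (Finsupp.single 0 (n - 1) + Finsupp.single 1 1)
      = Finsupp.single 1 (n - 1) + Finsupp.single 0 1 := by
    rw [Finsupp.mapDomain_add, Finsupp.mapDomain_single, Finsupp.mapDomain_single,
      Equiv.swap_apply_left, Equiv.swap_apply_right]
  rw [hmd] at hswap
  simp only [weakAdvancedF, genFun, MvPowerSeries.coeff_apply] at hswap
  have hcards : Nat.card {T : ℕ × ℕ → ℕ // IsFilling (cells α β) T ∧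
      (FirstColCond (cells α β) (· ≤ ·) T ∧ RowCond (cells α β) (· ≤ ·) T) ∧
      content (cells α β) T = Finsupp.single 1 (n - 1) + Finsupp.single 0 1}
      = Nat.card {T : ℕ × ℕ → ℕ // IsFilling (cells α β) T ∧
      (FirstColCond (cells α β) (· ≤ ·) T ∧ RowCond (cells α β) (· ≤ ·) T) ∧
      content (cells α β) T = Finsupp.single 0 (n - 1) + Finsupp.single 1 1} := by
    exact_mod_cast hswap
  have hUB := card_one_zero_le hα hβ hrows hLM (n - 1)
  omega

end OnlyIf

/-- **Theorem** (symmetry of weakly advanced functions): `𝒜𝔖*_{α/β}` is symmetric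
iff `α_i = 1` for `ℓ(β)+1 ≤ i ≤ ℓ(α)-1` (here `0`-indexed). -/
theorem weakAdvanced_symmetric_iff (α β : List ℕ)
    (hα : IsComposition α) (hβ : IsComposition β) (hsub : Subdiagram β α)
    (hconn : ConnectedDiagram α β) (hrows : RowsNonempty α β) :
    IsSymmFn (weakAdvancedF α β) ↔
      ∀ i, β.length ≤ i → i + 1 < α.length → α.getD i 0 = 1 := by
  constructor
  · intro hsym i hiL hiM
    by_contra hne
    have h1 := getD_pos_of_comp hα (by omega : i < α.length)
    exact not_symm_of_bad hα hβ hsub hrows hiL hiM (by omega) hsym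
  · exact fun hC => symm_of_cond hα hβ hsub hC

end SQS
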